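/- Let λ be odd and suppose {S_1,...,S_t} is a set of pairwise orthogonal frequency squares of type F(mλ;λ) satisfying a non-constant full relation. Then t ≡ m−1 (mod 4). -/
import Mathlib

open Finset

/-- `S` is a frequency square of type `F(mλ;λ)`: an `mλ × mλ` matrix with entries in
`{1,…,m}`, each symbol appearing exactly `λ` times in each row and each column. -/
def IsFS (m l : ℕ) (S : Matrix (Fin (m*l)) (Fin (m*l)) ℕ) : Prop :=
  (∀ i j, S i j ∈ Finset.Icc 1 m) ∧
  (∀ (i : Fin (m*l)) (a : ℕ), a ∈ Finset.Icc 1 m →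
    (Finset.univ.filter (fun j => S i j = a)).card = l) ∧
  (∀ (j : Fin (m*l)) (a : ℕ), a ∈ Finset.Icc 1 m →
    (Finset.univ.filter (fun i => S i j = a)).card = l)

/-- The indicator square `I_a(S)`. -/
def ind (m l : ℕ) (S : Matrix (Fin (m*l)) (Fin (m*l)) ℕ) (a : ℕ) :
    Matrix (Fin (m*l)) (Fin (m*l)) ℕ :=
  fun i j => if S i j = a then 1 else 0

/-- Orthogonality of two frequency squares: each ordered symbol pair appears `λ²` times. -/
def Orth (m l : ℕ) (S S' : Matrix (Fin (m*l)) (Fin (m*l)) ℕ) : Prop :=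
  ∀ a b : ℕ, a ∈ Finset.Icc 1 m → b ∈ Finset.Icc 1 m →
    (Finset.univ.filter
      (fun p : Fin (m*l) × Fin (m*l) => S p.1 p.2 = a ∧ S' p.1 p.2 = b)).card = l * l

/-- The set `{S 0, …, S (t-1)}` satisfies a non-constant full relation with respect to `x,y`. -/
def NCFR (m l t : ℕ) (S : Fin t → Matrix (Fin (m*l)) (Fin (m*l)) ℕ) (x y : ℕ) : Prop :=
  x ≤ m*l ∧ y ≤ m*l ∧ ¬((x = 0 ∨ x = m*l) ∧ (y = 0 ∨ y = m*l)) ∧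
  ∃ σ τ : Equiv.Perm (Fin (m*l)), ∀ i j : Fin (m*l),
    (∑ k, ind m l (S k) 1 (σ i) (τ j)) % 2 =
      (if ((i : ℕ) < x ↔ (j : ℕ) < y) then 0 else 1)

private lemma sum_mod_congr {α : Type*} (s : Finset α) (f g : α → ℕ) (n : ℕ)
    (h : ∀ i ∈ s, f i % n = g i % n) :
    (∑ i ∈ s, f i) % n = (∑ i ∈ s, g i) % n := by
  rw [Finset.sum_nat_mod, Finset.sum_congr rfl h, ← Finset.sum_nat_mod]

private lemma sq_mod8 (n : ℕ) (h : n % 2 = 0) : n ^ 2 % 8 = 2 * n % 8 := by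
  obtain ⟨q, rfl⟩ : ∃ q, n = 2 * q := ⟨n / 2, by omega⟩
  have h2 : q * q % 2 = q % 2 := by
    rw [Nat.mul_mod]
    rcases Nat.mod_two_eq_zero_or_one q with h | h <;> rw [h]
  have e : (2 * q) ^ 2 = 4 * (q * q) := by ring
  rw [e]
  omega

private lemma mul_odd_mod2 (a c : ℕ) (hc : c % 2 = 1) : a * c % 2 = a % 2 := by
  have := Nat.mul_mod a c 2
  rw [hc] at this
  omega

private lemma card_lt_fin (L x : ℕ) (hx : x ≤ L) :
    (∑ i : Fin L, (if (i : ℕ) < x then 1 else 0)) = x := by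
  rw [Fin.sum_univ_eq_sum_range (fun n => if n < x then 1 else 0) L, ← Finset.card_filter]
  have h : (Finset.range L).filter (fun n => n < x) = Finset.range x := by
    ext n
    simp only [Finset.mem_filter, Finset.mem_range]
    omega
  rw [h, Finset.card_range]

private lemma key8 : ∀ T M L X Y : ZMod 8,
    T ∈ ({1,3,5,7} : Finset (ZMod 8)) →
    L ∈ ({1,3,5,7} : Finset (ZMod 8)) →
    X ∈ ({1,3,5,7} : Finset (ZMod 8)) →
    Y ∈ ({1,3,5,7} : Finset (ZMod 8)) →
    M ∈ ({0,2,4,6} : Finset (ZMod 8)) →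
    (T*((M*L)*L) + T*((T-1)*(L*L)) + (M*L)*X + (M*L)*Y
        + 2*(T*L*X) + 2*(T*L*Y) + 2*(X*Y)
        = 2*((M*L)*(T*L) + (M*L)*X + (M*L)*Y)) →
    T + 1 - M ∈ ({0,4} : Finset (ZMod 8)) := by
  decide


private lemma parity_x_extreme (m l t x y A : ℕ) (hl2 : l % 2 = 1) (ht : 1 ≤ t)
    (hA : A ≤ 1)
    (hxe : x = 0 ∨ x = m*l)
    (c1 : (t*l + x + m*l) % 2 = 0)
    (c0 : (t*l + x + 0) % 2 = 0)
    (r : (t*l + (m*l) * A + y) % 2 = 0)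
    (claim3 : (m*l*l + (t-1)*(l*l) + x*l + y*l) % 2 = 0) : False := by
  have htl := mul_odd_mod2 t l hl2
  have hll : l*l % 2 = 1 := by rw [mul_odd_mod2 l l hl2]; exact hl2
  have hml := mul_odd_mod2 m l hl2
  have hmll : m*l*l % 2 = m % 2 := by rw [mul_odd_mod2 (m*l) l hl2]; exact hml
  have ht1l := mul_odd_mod2 (t-1) (l*l) hll
  have hxl := mul_odd_mod2 x l hl2
  have hyl := mul_odd_mod2 y l hl2
  interval_cases A
  · rw [mul_zero] at r
    omega
  · rw [mul_one] at r
    omega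

private lemma parity_y_extreme (m l t x y B : ℕ) (hl2 : l % 2 = 1) (ht : 1 ≤ t)
    (hB : B ≤ 1)
    (hye : y = 0 ∨ y = m*l)
    (r1 : (t*l + m*l + y) % 2 = 0)
    (r0 : (t*l + 0 + y) % 2 = 0)
    (c : (t*l + x + (m*l) * B) % 2 = 0)
    (claim3 : (m*l*l + (t-1)*(l*l) + x*l + y*l) % 2 = 0) : False := by
  have htl := mul_odd_mod2 t l hl2
  have hll : l*l % 2 = 1 := by rw [mul_odd_mod2 l l hl2]; exact hl2
  have hml := mul_odd_mod2 m l hl2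
  have hmll : m*l*l % 2 = m % 2 := by rw [mul_odd_mod2 (m*l) l hl2]; exact hml
  have ht1l := mul_odd_mod2 (t-1) (l*l) hll
  have hxl := mul_odd_mod2 x l hl2
  have hyl := mul_odd_mod2 y l hl2
  interval_cases B
  · rw [mul_zero] at c
    omega
  · rw [mul_one] at c
    omega

private lemma parity_interior (m l t x y : ℕ) (hl2 : l % 2 = 1) (ht : 1 ≤ t)
    (r1 : (t*l + m*l + y) % 2 = 0)
    (r0 : (t*l + 0 + y) % 2 = 0)
    (c0 : (t*l + x + 0) % 2 = 0)
    (claim3 : (m*l*l + (t-1)*(l*l) + x*l + y*l) % 2 = 0) :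
    t % 2 = 1 ∧ x % 2 = 1 ∧ y % 2 = 1 ∧ m % 2 = 0 := by
  have htl := mul_odd_mod2 t l hl2
  have hll : l*l % 2 = 1 := by rw [mul_odd_mod2 l l hl2]; exact hl2
  have hml := mul_odd_mod2 m l hl2
  have hmll : m*l*l % 2 = m % 2 := by rw [mul_odd_mod2 (m*l) l hl2]; exact hml
  have ht1l := mul_odd_mod2 (t-1) (l*l) hll
  have hxl := mul_odd_mod2 x l hl2
  have hyl := mul_odd_mod2 y l hl2
  omega

private lemma final_step (t m : ℕ)
    (h : (t + 1) % 8 = m % 8 ∨ (t + 1) % 8 = (m + 4) % 8) :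
    (t : ℤ) % 4 = ((m : ℤ) - 1) % 4 := by omega

theorem stmt14 (m l t : ℕ) (hm : 0 < m) (hl : Odd l)
    (S : Fin t → Matrix (Fin (m*l)) (Fin (m*l)) ℕ)
    (hS : ∀ k, IsFS m l (S k))
    (horth : ∀ k k', k ≠ k' → Orth m l (S k) (S k'))
    (hrel : ∃ x y, NCFR m l t S x y) :
    (t : ℤ) ≡ (m : ℤ) - 1 [ZMOD 4] := by
  classical
  obtain ⟨x, y, hx, hy, hnc, σ, τ, hrel⟩ := hrel
  have hl2 : l % 2 = 1 := Nat.odd_iff.mp hl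
  have hlpos : 0 < l := by omega
  have hLpos : 0 < m * l := Nat.mul_pos hm hlpos
  have h1m : (1 : ℕ) ∈ Finset.Icc 1 m := by
    rw [Finset.mem_Icc]; omega
  -- basic indicator facts
  have hT01 : ∀ (k : Fin t) (i j : Fin (m*l)), ind m l (S k) 1 i j = 0 ∨ ind m l (S k) 1 i j = 1 := by
    intro k i j
    unfold ind
    split_ifs <;> simp
  have hrow : ∀ (k : Fin t) (i : Fin (m*l)), ∑ j, ind m l (S k) 1 i j = l := by
    intro k i
    have h := (hS k).2.1 i 1 h1m
    rw [Finset.card_filter] at h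
    exact h
  have hcolT : ∀ (k : Fin t) (j : Fin (m*l)), ∑ i, ind m l (S k) 1 i j = l := by
    intro k j
    have h := (hS k).2.2 j 1 h1m
    rw [Finset.card_filter] at h
    exact h
  have hpair : ∀ k k' : Fin t, k ≠ k' →
      (∑ i, ∑ j, ind m l (S k) 1 i j * ind m l (S k') 1 i j) = l * l := by
    intro k k' hkk'
    have h := horth k k' hkk' 1 1 h1m h1m
    rw [Finset.card_filter, Fintype.sum_prod_type] at h
    rw [← h]
    apply Finset.sum_congr rfl
    intro i _
    apply Finset.sum_congr rfl
    intro j _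
    unfold ind
    by_cases h1 : S k i j = 1 <;> by_cases h2 : S k' i j = 1 <;> simp [h1, h2]
  -- the sum square M, and the row/column indicator vectors a, b
  set M : Fin (m*l) → Fin (m*l) → ℕ := fun i j => ∑ k, ind m l (S k) 1 i j with hMdef
  set a : Fin (m*l) → ℕ := fun i => if ((σ.symm i : Fin (m*l)) : ℕ) < x then 1 else 0 with hadef
  set b : Fin (m*l) → ℕ := fun j => if ((τ.symm j : Fin (m*l)) : ℕ) < y then 1 else 0 with hbdef
  have ha01 : ∀ i, a i = 0 ∨ a i = 1 := by
    intro i; rw [hadef]; dsimp only; split_ifs <;> simp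
  have hb01 : ∀ j, b j = 0 ∨ b j = 1 := by
    intro j; rw [hbdef]; dsimp only; split_ifs <;> simp
  have hsa : ∑ i, a i = x := by
    rw [hadef]
    exact (Equiv.sum_comp σ.symm (fun i' : Fin (m*l) => if (i' : ℕ) < x then 1 else 0)).trans
      (card_lt_fin (m*l) x hx)
  have hsb : ∑ j, b j = y := by
    rw [hbdef]
    exact (Equiv.sum_comp τ.symm (fun j' : Fin (m*l) => if (j' : ℕ) < y then 1 else 0)).trans
      (card_lt_fin (m*l) y hy)
  -- cell parity
  have hcell : ∀ i j : Fin (m*l), (M i j + a i + b j) % 2 = 0 := by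
    intro i j
    have h := hrel (σ.symm i) (τ.symm j)
    simp only [Equiv.apply_symm_apply] at h
    rw [hMdef, hadef, hbdef]
    dsimp only
    by_cases h1 : ((σ.symm i : Fin (m*l)) : ℕ) < x <;>
      by_cases h2 : ((τ.symm j : Fin (m*l)) : ℕ) < y <;>
        simp only [h1, h2, if_true, if_false, iff_true, iff_false, not_true, not_false_iff] at h ⊢ <;>
          omega
  -- row and column sums of M
  have hMrow : ∀ i, ∑ j, M i j = t * l := by
    intro i
    rw [hMdef]
    dsimp only
    rw [Finset.sum_comm]
    rw [Finset.sum_congr rfl (fun k _ => hrow k i)]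
    simp [mul_comm]
  have hMcol : ∀ j, ∑ i, M i j = t * l := by
    intro j
    rw [hMdef]
    dsimp only
    rw [Finset.sum_comm]
    rw [Finset.sum_congr rfl (fun k _ => hcolT k j)]
    simp [mul_comm]
  -- the t = 0 case is impossible
  rcases Nat.eq_zero_or_pos t with ht0 | htpos
  · exfalso
    subst ht0
    have hiff : ∀ i j : Fin (m*l), ((i : ℕ) < x ↔ (j : ℕ) < y) := by
      intro i j
      have h := hrel i j
      simp only [Finset.univ_eq_empty, Finset.sum_empty, Nat.zero_mod] at h
      by_contra hco
      rw [if_neg hco] at h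
      exact one_ne_zero h.symm
    by_cases hx0 : x = 0
    · have hy0 : y = 0 := by
        by_contra hy0
        have := (hiff ⟨0, hLpos⟩ ⟨0, hLpos⟩).mpr (by simp; omega)
        simp at this
        omega
      exact hnc ⟨Or.inl hx0, Or.inl hy0⟩
    · have hyL : y = m*l := by
        have hj := (hiff ⟨0, hLpos⟩ ⟨m*l-1, by omega⟩).mp (by simp; omega)
        simp at hj
        omega
      have hxL : x = m*l := by
        have h2 := (hiff ⟨m*l-1, by omega⟩ ⟨0, hLpos⟩).mpr (by simp; omega)
        simp at h2
        omega
      exact hnc ⟨Or.inr hxL, Or.inr hyL⟩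
  --从 now on t ≥ 1
  -- inner product of T_k with M
  have hTM : ∀ k : Fin t,
      (∑ i, ∑ j, ind m l (S k) 1 i j * M i j) = m*l*l + (t-1)*(l*l) := by
    intro k
    have step1 : (∑ i, ∑ j, ind m l (S k) 1 i j * M i j)
        = ∑ k' : Fin t, ∑ i, ∑ j, ind m l (S k) 1 i j * ind m l (S k') 1 i j := by
      rw [hMdef]
      dsimp only
      calc (∑ i, ∑ j, ind m l (S k) 1 i j * ∑ k', ind m l (S k') 1 i j)
          = ∑ i, ∑ j, ∑ k', ind m l (S k) 1 i j * ind m l (S k') 1 i j := by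
            apply Finset.sum_congr rfl; intro i _
            apply Finset.sum_congr rfl; intro j _
            exact Finset.mul_sum _ _ _
        _ = ∑ i, ∑ k', ∑ j, ind m l (S k) 1 i j * ind m l (S k') 1 i j := by
            apply Finset.sum_congr rfl; intro i _
            exact Finset.sum_comm
        _ = ∑ k', ∑ i, ∑ j, ind m l (S k) 1 i j * ind m l (S k') 1 i j :=
            Finset.sum_comm
    rw [step1, ← Finset.add_sum_erase _ _ (Finset.mem_univ k)]
    have hdiag : (∑ i, ∑ j, ind m l (S k) 1 i j * ind m l (S k) 1 i j) = m*l*l := by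
      have : ∀ i j : Fin (m*l), ind m l (S k) 1 i j * ind m l (S k) 1 i j = ind m l (S k) 1 i j := by
        intro i j
        rcases hT01 k i j with h | h <;> rw [h]
      calc (∑ i, ∑ j, ind m l (S k) 1 i j * ind m l (S k) 1 i j)
          = ∑ i : Fin (m*l), ∑ j, ind m l (S k) 1 i j := by
            apply Finset.sum_congr rfl; intro i _
            exact Finset.sum_congr rfl (fun j _ => this i j)
        _ = ∑ i : Fin (m*l), l := Finset.sum_congr rfl (fun i _ => hrow k i)
        _ = m*l*l := by simp [mul_comm]
    have hoff : (∑ k' ∈ Finset.univ.erase k, ∑ i, ∑ j,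
        ind m l (S k) 1 i j * ind m l (S k') 1 i j) = (t-1)*(l*l) := by
      rw [Finset.sum_congr rfl
        (fun k' hk' => hpair k k' (Ne.symm (Finset.ne_of_mem_erase hk')))]
      rw [Finset.sum_const, Finset.card_erase_of_mem (Finset.mem_univ k)]
      simp
    rw [hdiag, hoff]
  -- claim 3: parity of the inner product of one square with (M + a + b)
  have hClaim3 : (m*l*l + (t-1)*(l*l) + x*l + y*l) % 2 = 0 := by
    set k0 : Fin t := ⟨0, htpos⟩
    have hsplit : (∑ i, ∑ j, ind m l (S k0) 1 i j * (M i j + a i + b j))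
        = (m*l*l + (t-1)*(l*l)) + x*l + y*l := by
      have cellid : ∀ i j : Fin (m*l), ind m l (S k0) 1 i j * (M i j + a i + b j)
          = ind m l (S k0) 1 i j * M i j + ind m l (S k0) 1 i j * a i
            + ind m l (S k0) 1 i j * b j := by
        intro i j; ring
      calc (∑ i, ∑ j, ind m l (S k0) 1 i j * (M i j + a i + b j))
          = (∑ i, ∑ j, ind m l (S k0) 1 i j * M i j)
            + (∑ i, ∑ j, ind m l (S k0) 1 i j * a i)
            + (∑ i, ∑ j, ind m l (S k0) 1 i j * b j) := by
            rw [← Finset.sum_add_distrib, ← Finset.sum_add_distrib]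
            apply Finset.sum_congr rfl; intro i _
            rw [← Finset.sum_add_distrib, ← Finset.sum_add_distrib]
            exact Finset.sum_congr rfl (fun j _ => cellid i j)
        _ = (m*l*l + (t-1)*(l*l)) + x*l + y*l := by
            congr 1
            · congr 1
              · exact hTM k0
              · -- ∑ i ∑ j T * a i = x * l
                calc (∑ i, ∑ j, ind m l (S k0) 1 i j * a i)
                    = ∑ i : Fin (m*l), (∑ j, ind m l (S k0) 1 i j) * a i := by
                      apply Finset.sum_congr rfl; intro i _
                      exact (Finset.sum_mul _ _ _).symm
                  _ = ∑ i : Fin (m*l), l * a i := by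
                      apply Finset.sum_congr rfl; intro i _
                      rw [hrow k0 i]
                  _ = l * ∑ i, a i := (Finset.mul_sum _ _ _).symm
                  _ = x * l := by rw [hsa, mul_comm]
            · calc (∑ i, ∑ j, ind m l (S k0) 1 i j * b j)
                  = ∑ j, ∑ i, ind m l (S k0) 1 i j * b j := Finset.sum_comm
                _ = ∑ j : Fin (m*l), (∑ i, ind m l (S k0) 1 i j) * b j := by
                    apply Finset.sum_congr rfl; intro j _
                    exact (Finset.sum_mul _ _ _).symm
                _ = ∑ j : Fin (m*l), l * b j := by
                    apply Finset.sum_congr rfl; intro j _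
                    rw [hcolT k0 j]
                _ = l * ∑ j, b j := (Finset.mul_sum _ _ _).symm
                _ = y * l := by rw [hsb, mul_comm]
    have hpar : (∑ i, ∑ j, ind m l (S k0) 1 i j * (M i j + a i + b j)) % 2 = 0 := by
      have h1 : (∑ i, ∑ j, ind m l (S k0) 1 i j * (M i j + a i + b j)) % 2
          = (∑ i : Fin (m*l), ∑ j : Fin (m*l), (0:ℕ)) % 2 := by
        apply sum_mod_congr
        intro i _
        apply sum_mod_congr
        intro j _
        rcases hT01 k0 i j with h | h <;> rw [h]
        · simp
        · rw [one_mul, hcell i j]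
      simpa using h1
    omega
  -- row/column parity aggregates
  have hRow : ∀ i : Fin (m*l), (t*l + (m*l) * a i + y) % 2 = 0 := by
    intro i
    have heval : (∑ j, (M i j + a i + b j)) = t*l + (m*l) * a i + y := by
      rw [Finset.sum_add_distrib, Finset.sum_add_distrib, hMrow i, hsb,
        Finset.sum_const]
      simp [mul_comm]
    have hpar : (∑ j, (M i j + a i + b j)) % 2 = 0 := by
      have h1 : (∑ j, (M i j + a i + b j)) % 2 = (∑ j : Fin (m*l), (0:ℕ)) % 2 :=
        sum_mod_congr _ _ _ _ (fun j _ => hcell i j)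
      simpa using h1
    omega
  have hCol : ∀ j : Fin (m*l), (t*l + x + (m*l) * b j) % 2 = 0 := by
    intro j
    have heval : (∑ i, (M i j + a i + b j)) = t*l + x + (m*l) * b j := by
      rw [Finset.sum_add_distrib, Finset.sum_add_distrib, hMcol j, hsa,
        Finset.sum_const]
      simp [mul_comm]
    have hpar : (∑ i, (M i j + a i + b j)) % 2 = 0 := by
      have h1 : (∑ i, (M i j + a i + b j)) % 2 = (∑ i : Fin (m*l), (0:ℕ)) % 2 :=
        sum_mod_congr _ _ _ _ (fun i _ => hcell i j)
      simpa using h1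
    omega
  -- useful parity rewrites
  have htl : t*l % 2 = t % 2 := mul_odd_mod2 t l hl2
  have hll : l*l % 2 = 1 := by rw [mul_odd_mod2 l l hl2]; exact hl2
  have hml : m*l % 2 = m % 2 := mul_odd_mod2 m l hl2
  have hmll : m*l*l % 2 = m % 2 := by rw [mul_odd_mod2 (m*l) l hl2]; exact hml
  have ht1l : (t-1)*(l*l) % 2 = (t-1) % 2 := mul_odd_mod2 (t-1) (l*l) hll
  have hxl : x*l % 2 = x % 2 := mul_odd_mod2 x l hl2
  have hyl : y*l % 2 = y % 2 := mul_odd_mod2 y l hl2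
  -- existence of rows/columns of each type
  have hexa1 : x ≠ 0 → ∃ i, a i = 1 := by
    intro hx0
    by_contra h
    push_neg at h
    have hz : ∀ i, a i = 0 := fun i => (ha01 i).resolve_right (h i)
    have : (∑ i, a i) = 0 := by simp [hz]
    omega
  have hexa0 : x ≠ m*l → ∃ i, a i = 0 := by
    intro hxL
    by_contra h
    push_neg at h
    have hz : ∀ i, a i = 1 := fun i => (ha01 i).resolve_left (h i)
    have : (∑ i, a i) = m*l := by simp [hz]
    omega
  have hexb1 : y ≠ 0 → ∃ j, b j = 1 := by
    intro hy0
    by_contra h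
    push_neg at h
    have hz : ∀ j, b j = 0 := fun j => (hb01 j).resolve_right (h j)
    have : (∑ j, b j) = 0 := by simp [hz]
    omega
  have hexb0 : y ≠ m*l → ∃ j, b j = 0 := by
    intro hyL
    by_contra h
    push_neg at h
    have hz : ∀ j, b j = 1 := fun j => (hb01 j).resolve_left (h j)
    have : (∑ j, b j) = m*l := by simp [hz]
    omega
  -- case analysis to get parities
  have hparities : t % 2 = 1 ∧ x % 2 = 1 ∧ y % 2 = 1 ∧ m % 2 = 0 := by
    by_cases hxe : x = 0 ∨ x = m*l
    · exfalso
      have hye : ¬(y = 0 ∨ y = m*l) := fun h => hnc ⟨hxe, h⟩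
      push_neg at hye
      obtain ⟨j1, hj1⟩ := hexb1 hye.1
      obtain ⟨j0, hj0⟩ := hexb0 hye.2
      have c1 := hCol j1
      have c0 := hCol j0
      rw [hj1, mul_one] at c1
      rw [hj0, mul_zero] at c0
      have r := hRow ⟨0, hLpos⟩
      rcases ha01 ⟨0, hLpos⟩ with hA | hA
      · rw [hA] at r
        exact parity_x_extreme m l t x y 0 hl2 htpos (by omega) hxe c1 c0 r hClaim3
      · rw [hA] at r
        exact parity_x_extreme m l t x y 1 hl2 htpos (by omega) hxe c1 c0 r hClaim3
    · push_neg at hxe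
      obtain ⟨i1, hi1⟩ := hexa1 hxe.1
      obtain ⟨i0, hi0⟩ := hexa0 hxe.2
      have r1 := hRow i1
      have r0 := hRow i0
      rw [hi1, mul_one] at r1
      rw [hi0, mul_zero] at r0
      by_cases hye : y = 0 ∨ y = m*l
      · exfalso
        have c := hCol ⟨0, hLpos⟩
        rcases hb01 ⟨0, hLpos⟩ with hB | hB
        · rw [hB] at c
          exact parity_y_extreme m l t x y 0 hl2 htpos (by omega) hye r1 r0 c hClaim3
        · rw [hB] at c
          exact parity_y_extreme m l t x y 1 hl2 htpos (by omega) hye r1 r0 c hClaim3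
      · push_neg at hye
        obtain ⟨j0, hj0⟩ := hexb0 hye.2
        have c0 := hCol j0
        rw [hj0, mul_zero] at c0
        exact parity_interior m l t x y hl2 htpos r1 r0 c0 hClaim3
  obtain ⟨ht2, hx2, hy2, hm2⟩ := hparities
  -- the mod 8 identity
  have hSqEval : (∑ i, ∑ j, (M i j + a i + b j)^2)
      = (t*(m*l*l) + t*((t-1)*(l*l))) + (m*l)*x + (m*l)*y
        + 2*(t*l*x) + 2*(t*l*y) + 2*(x*y) := by
    have cellid : ∀ i j : Fin (m*l), (M i j + a i + b j)^2
        = (M i j * M i j + 2*(M i j * a i) + 2*(M i j * b j) + 2*(a i * b j)) + a i + b j := by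
      intro i j
      rcases ha01 i with h | h <;> rcases hb01 j with h' | h' <;> rw [h, h'] <;> ring
    have hMM : (∑ i, ∑ j, M i j * M i j) = t*(m*l*l) + t*((t-1)*(l*l)) := by
      have e1 : ∀ i j : Fin (m*l), M i j * M i j = ∑ k, ind m l (S k) 1 i j * M i j := by
        intro i j
        conv_lhs => rw [hMdef]
        exact Finset.sum_mul _ _ _
      have step : (∑ i, ∑ j, M i j * M i j)
          = ∑ k : Fin t, ∑ i, ∑ j, ind m l (S k) 1 i j * M i j := by
        calc (∑ i, ∑ j, M i j * M i j)
            = ∑ i, ∑ j, ∑ k, ind m l (S k) 1 i j * M i j := by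
              apply Finset.sum_congr rfl; intro i _
              exact Finset.sum_congr rfl (fun j _ => e1 i j)
          _ = ∑ i, ∑ k, ∑ j, ind m l (S k) 1 i j * M i j := by
              apply Finset.sum_congr rfl; intro i _
              exact Finset.sum_comm
          _ = ∑ k, ∑ i, ∑ j, ind m l (S k) 1 i j * M i j := Finset.sum_comm
      rw [step, Finset.sum_congr rfl (fun k _ => hTM k), Finset.sum_const]
      simp [mul_add]
    have hMa : (∑ i, ∑ j, M i j * a i) = t*l*x := by
      calc (∑ i, ∑ j, M i j * a i)
          = ∑ i : Fin (m*l), (∑ j, M i j) * a i := by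
            apply Finset.sum_congr rfl; intro i _
            exact (Finset.sum_mul _ _ _).symm
        _ = ∑ i : Fin (m*l), (t*l) * a i := by
            apply Finset.sum_congr rfl; intro i _
            rw [hMrow i]
        _ = (t*l) * ∑ i, a i := (Finset.mul_sum _ _ _).symm
        _ = t*l*x := by rw [hsa]
    have hMb : (∑ i, ∑ j, M i j * b j) = t*l*y := by
      calc (∑ i, ∑ j, M i j * b j)
          = ∑ j, ∑ i, M i j * b j := Finset.sum_comm
        _ = ∑ j : Fin (m*l), (∑ i, M i j) * b j := by
            apply Finset.sum_congr rfl; intro j _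
            exact (Finset.sum_mul _ _ _).symm
        _ = ∑ j : Fin (m*l), (t*l) * b j := by
            apply Finset.sum_congr rfl; intro j _
            rw [hMcol j]
        _ = (t*l) * ∑ j, b j := (Finset.mul_sum _ _ _).symm
        _ = t*l*y := by rw [hsb]
    have hab : (∑ i, ∑ j, a i * b j) = x*y := by
      calc (∑ i, ∑ j, a i * b j)
          = ∑ i : Fin (m*l), a i * ∑ j, b j := by
            apply Finset.sum_congr rfl; intro i _
            exact (Finset.mul_sum _ _ _).symm
        _ = ∑ i : Fin (m*l), a i * y := by
            apply Finset.sum_congr rfl; intro i _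
            rw [hsb]
        _ = (∑ i, a i) * y := (Finset.sum_mul _ _ _).symm
        _ = x*y := by rw [hsa]
    have haa : (∑ i, ∑ _j : Fin (m*l), a i) = (m*l)*x := by
      have e : ∀ i : Fin (m*l), (∑ _j : Fin (m*l), a i) = (m*l) * a i := by
        intro i
        rw [Finset.sum_const, Finset.card_univ, Fintype.card_fin, smul_eq_mul]
      calc (∑ i, ∑ _j : Fin (m*l), a i)
          = ∑ i : Fin (m*l), (m*l) * a i := Finset.sum_congr rfl (fun i _ => e i)
        _ = (m*l) * ∑ i, a i := (Finset.mul_sum _ _ _).symm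
        _ = (m*l)*x := by rw [hsa]
    have hbb : (∑ _i : Fin (m*l), ∑ j, b j) = (m*l)*y := by
      calc (∑ _i : Fin (m*l), ∑ j, b j)
          = ∑ _i : Fin (m*l), y := Finset.sum_congr rfl (fun _ _ => hsb)
        _ = (m*l)*y := by
            rw [Finset.sum_const, Finset.card_univ, Fintype.card_fin, smul_eq_mul]
    calc (∑ i, ∑ j, (M i j + a i + b j)^2)
        = (∑ i, ∑ j, ((M i j * M i j + 2*(M i j * a i) + 2*(M i j * b j) + 2*(a i * b j)) + a i + b j)) := by
          apply Finset.sum_congr rfl; intro i _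
          exact Finset.sum_congr rfl (fun j _ => cellid i j)
      _ = (∑ i, ∑ j, M i j * M i j) + (∑ i, ∑ j, 2*(M i j * a i))
            + (∑ i, ∑ j, 2*(M i j * b j)) + (∑ i, ∑ j, 2*(a i * b j))
          + (∑ i, ∑ _j : Fin (m*l), a i) + (∑ _i : Fin (m*l), ∑ j, b j) := by
          simp only [Finset.sum_add_distrib]
      _ = (t*(m*l*l) + t*((t-1)*(l*l))) + (m*l)*x + (m*l)*y
            + 2*(t*l*x) + 2*(t*l*y) + 2*(x*y) := by
          have pull2 : ∀ f : Fin (m*l) → Fin (m*l) → ℕ,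
              (∑ i, ∑ j, 2 * f i j) = 2 * ∑ i, ∑ j, f i j := by
            intro f
            calc (∑ i, ∑ j, 2 * f i j)
                = ∑ i : Fin (m*l), 2 * ∑ j, f i j :=
                  Finset.sum_congr rfl (fun i _ => (Finset.mul_sum _ _ _).symm)
              _ = 2 * ∑ i, ∑ j, f i j := (Finset.mul_sum _ _ _).symm
          rw [pull2 (fun i j => M i j * a i), pull2 (fun i j => M i j * b j),
            pull2 (fun i j => a i * b j), hMM, hMa, hMb, hab, haa, hbb]
          ring
  have hSlEval : (∑ i, ∑ j, 2*(M i j + a i + b j))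
      = 2*((m*l)*(t*l) + (m*l)*x + (m*l)*y) := by
    have heval : ∀ i : Fin (m*l), (∑ j, (M i j + a i + b j)) = t*l + (m*l) * a i + y := by
      intro i
      rw [Finset.sum_add_distrib, Finset.sum_add_distrib, hMrow i, hsb, Finset.sum_const]
      simp [mul_comm]
    calc (∑ i, ∑ j, 2*(M i j + a i + b j))
        = ∑ i : Fin (m*l), 2 * (∑ j, (M i j + a i + b j)) := by
          apply Finset.sum_congr rfl; intro i _
          exact (Finset.mul_sum _ _ _).symm
      _ = ∑ i : Fin (m*l), 2 * (t*l + (m*l) * a i + y) := by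
          apply Finset.sum_congr rfl; intro i _
          rw [heval i]
      _ = 2*((m*l)*(t*l) + (m*l)*x + (m*l)*y) := by
          simp only [mul_add, Finset.sum_add_distrib, Finset.sum_const, Finset.card_univ,
            Fintype.card_fin, smul_eq_mul, ← Finset.mul_sum, hsa]
          ring
  have hmod8 : ((t*(m*l*l) + t*((t-1)*(l*l))) + (m*l)*x + (m*l)*y
        + 2*(t*l*x) + 2*(t*l*y) + 2*(x*y)) % 8
      = (2*((m*l)*(t*l) + (m*l)*x + (m*l)*y)) % 8 := by
    rw [← hSqEval, ← hSlEval]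
    exact sum_mod_congr _ _ _ _ (fun i _ => sum_mod_congr _ _ _ _
      (fun j _ => sq_mod8 _ (hcell i j)))
  -- transfer to ZMod 8 and finish with key8
  have h8 : ((t*(m*l*l) + t*((t-1)*(l*l)) + (m*l)*x + (m*l)*y
        + 2*(t*l*x) + 2*(t*l*y) + 2*(x*y) : ℕ) : ZMod 8)
      = ((2*((m*l)*(t*l) + (m*l)*x + (m*l)*y) : ℕ) : ZMod 8) :=
    (ZMod.natCast_eq_natCast_iff' _ _ _).mpr hmod8
  have h1t : 1 ≤ t := htpos
  push_cast [Nat.cast_sub h1t] at h8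
  have modmem : ∀ n : ℕ, n % 2 = 1 → ((n : ℕ) : ZMod 8) ∈ ({1,3,5,7} : Finset (ZMod 8)) := by
    intro n hn
    have h : n % 8 = 1 ∨ n % 8 = 3 ∨ n % 8 = 5 ∨ n % 8 = 7 := by omega
    rw [show ((n : ℕ) : ZMod 8) = ((n % 8 : ℕ) : ZMod 8) from (ZMod.natCast_mod _ 8).symm]
    rcases h with h | h | h | h <;> rw [h] <;> decide
  have hmemM : ((m : ℕ) : ZMod 8) ∈ ({0,2,4,6} : Finset (ZMod 8)) := by
    have h : m % 8 = 0 ∨ m % 8 = 2 ∨ m % 8 = 4 ∨ m % 8 = 6 := by omega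
    rw [show ((m : ℕ) : ZMod 8) = ((m % 8 : ℕ) : ZMod 8) from (ZMod.natCast_mod _ 8).symm]
    rcases h with h | h | h | h <;> rw [h] <;> decide
  have hkey := key8 ((t : ℕ) : ZMod 8) ((m : ℕ) : ZMod 8) ((l : ℕ) : ZMod 8)
    ((x : ℕ) : ZMod 8) ((y : ℕ) : ZMod 8) (modmem t ht2) (modmem l hl2)
    (modmem x hx2) (modmem y hy2) hmemM (by linear_combination h8)
  simp only [Finset.mem_insert, Finset.mem_singleton] at hkey
  have hconc : ((t + 1 : ℕ) : ZMod 8) = ((m : ℕ) : ZMod 8)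
      ∨ ((t + 1 : ℕ) : ZMod 8) = ((m + 4 : ℕ) : ZMod 8) := by
    rcases hkey with h | h
    · left
      push_cast
      linear_combination h
    · right
      push_cast
      linear_combination h
  have hfinal : (t + 1) % 8 = m % 8 ∨ (t + 1) % 8 = (m + 4) % 8 := by
    rcases hconc with h | h
    · exact Or.inl ((ZMod.natCast_eq_natCast_iff' _ _ _).mp h)
    · exact Or.inr ((ZMod.natCast_eq_natCast_iff' _ _ _).mp h)
  exact final_step t m hfinal
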